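/- arXiv:1401.0758 — 4 statements merged into one kernel-verified Lean document; each statement's English description precedes it below -/
import Mathlib

section
/- For any graph G, the cutwidth of G equals the width of G, where the width is defined via monotone set families: CW(G) = max over monotone families Ω ⊆ P(V(G)) with ∅ ∈ Ω and V(G) ∉ Ω, of the minimum over pairs (S₁, S₂) with S₂ ∈ Ω, S₁ ∉ Ω, S₁ = S₂ ∪ {v} for some vertex v, of max(|E(S₁, V\S₁)|, |E(S₂, V\S₂)|). -/
open SimpleGraph

noncomputable def cutCount {V : Type*} (G : SimpleGraph V) (S : Set V) : ℕ :=
  {p : V × V | p.1 ∈ S ∧ p.2 ∉ S ∧ G.Adj p.1 p.2}.ncard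

/-- Cutwidth: the least `w` such that some linear ordering of the vertices has all
prefix cuts of size at most `w`. -/
noncomputable def cutwidth {V : Type*} [Fintype V] (G : SimpleGraph V) : ℕ :=
  sInf { w | ∃ π : Fin (Fintype.card V) ≃ V,
    ∀ i : Fin (Fintype.card V), cutCount G (π '' {j | j ≤ i}) ≤ w }

/-- Width of a graph, via monotone families: the supremum over monotone families
`Ω` (closed downward, containing `∅` and not containing `univ`) of the infimum,
over boundary pairs `(S₁, S₂)` with `S₂ ∈ Ω`, `S₁ ∉ Ω`, `S₁ = S₂ ∪ {v}`, of
`max(|E(S₁, S₁ᶜ)|, |E(S₂, S₂ᶜ)|)`. -/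
noncomputable def graphWidth {V : Type*} [Fintype V] (G : SimpleGraph V) : ℕ :=
  sSup { m | ∃ Ω : Set (Set V),
    (∀ S₁ S₂ : Set V, S₁ ⊆ S₂ → S₂ ∈ Ω → S₁ ∈ Ω) ∧
    (∅ : Set V) ∈ Ω ∧ (Set.univ : Set V) ∉ Ω ∧
    m = sInf { w | ∃ (S₁ S₂ : Set V) (v : V), S₂ ∈ Ω ∧ S₁ ∉ Ω ∧ S₁ = insert v S₂ ∧
      w = max (cutCount G S₁) (cutCount G S₂) } }

/-!
`graphWidth ≤ cutwidth`: along an optimal ordering the prefixes start in `Ω` (at `∅`) and end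
outside it (at `univ`), and the first prefix to leave `Ω` yields a boundary pair both of whose
cuts are bounded by the cutwidth.

`cutwidth ≤ graphWidth`: let `cutwidth G = w + 1` and let `Ω` consist of the subsets of the
ends of crusades of width `w`, i.e. sequences of sets starting at `∅` in which each step adds at
most one vertex (but may remove any number) and every cut is at most `w`. A boundary pair of `Ω`
with both cuts at most `w` would extend such a crusade, so every boundary pair costs at least
`w + 1`, and it remains to see `univ ∉ Ω`. A crusade to `univ` can be made monotone: if
`X i ⊄ X (i + 1)`, submodularity of the cut function allows replacing `X i` by
`X i ∩ X (i + 1)` or `X (i + 1)` by `X i ∪ X (i + 1)`, which lowers the total cut or keeps it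
and lowers the total size. A monotone crusade to `univ` is an ordering of width `w`.
-/

lemma Finset.sum_comp_update_add {α : Type*} (g : α → ℕ) (f : ℕ → α) {s : Finset ℕ} {i : ℕ}
    (hi : i ∈ s) (b : α) :
    ∑ j ∈ s, g (Function.update f i b j) + g (f i) = ∑ j ∈ s, g (f j) + g b := by
  have e (j : ℕ) : g (Function.update f i b j) = Function.update (g ∘ f) i (g b) j :=
    congrFun (Function.comp_update g f i b) j
  rw [Finset.sum_congr rfl fun j _ => e j, Finset.sum_update_of_mem hi,
    Finset.sum_eq_sum_sdiff_singleton_add hi fun j => g (f j)]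
  simp only [Function.comp_apply]
  omega

section

variable {V : Type*} {G : SimpleGraph V} {w : ℕ}

lemma cutCount_empty (G : SimpleGraph V) : cutCount G ∅ = 0 := by
  simp [cutCount]

lemma cutCount_union_add_cutCount_inter_le [Finite V] (G : SimpleGraph V) (A B : Set V) :
    cutCount G (A ∪ B) + cutCount G (A ∩ B) ≤ cutCount G A + cutCount G B := by
  classical
  have : Fintype V := Fintype.ofFinite V
  have hcard (S : Set V) : cutCount G S =
      ∑ p : V × V, if p.1 ∈ S ∧ p.2 ∉ S ∧ G.Adj p.1 p.2 then 1 else 0 := by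
    rw [cutCount, ← Finset.card_filter, ← Set.ncard_coe_finset]
    simp
  simp only [hcard, ← Finset.sum_add_distrib]
  refine Finset.sum_le_sum fun p _ => ?_
  simp only [Set.mem_union, Set.mem_inter_iff]
  split_ifs <;> tauto

inductive Buildable (G : SimpleGraph V) (w : ℕ) : Set V → Prop
  | empty : Buildable G w ∅
  | step {S : Set V} (v : V) :
      Buildable G w S → cutCount G (insert v S) ≤ w → Buildable G w (insert v S)

lemma Buildable.cutCount_le {S : Set V} (h : Buildable G w S) : cutCount G S ≤ w := by
  cases h with
  | empty => simp [cutCount_empty]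
  | step v _ hv => exact hv

lemma Buildable.exists_list {A : Set V} (h : Buildable G w A) :
    ∃ l : List V, l.Nodup ∧ {x | x ∈ l} = A ∧ ∀ k, cutCount G {x | x ∈ l.take k} ≤ w := by
  induction h with
  | empty => exact ⟨[], List.nodup_nil, by simp, fun k => by simp [cutCount_empty]⟩
  | @step S v _ hv ih =>
    obtain ⟨l, hnd, rfl, hl⟩ := ih
    by_cases hvl : v ∈ l
    · exact ⟨l, hnd, by simp [hvl], hl⟩
    refine ⟨l ++ [v], hnd.append (List.nodup_singleton v) (by simpa using hvl),
      by ext; simp [or_comm], ?_⟩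
    intro k
    rcases le_or_gt k l.length with hk | hk
    · rw [List.take_append_of_le_length hk]; exact hl k
    · rw [List.take_of_length_le (by simp; omega)]
      convert hv using 2; ext; simp [or_comm]

lemma buildable_of_list (l : List V)
    (hl : ∀ k < l.length, cutCount G {x | x ∈ l.take (k + 1)} ≤ w) :
    Buildable G w {x | x ∈ l} := by
  induction l using List.reverseRecOn with
  | nil => simp [Buildable.empty]
  | append_singleton l v ih =>
    have hset : {x | x ∈ l ++ [v]} = insert v {x | x ∈ l} := by ext; simp [or_comm]
    rw [hset]
    refine .step v (ih fun k hk => ?_) ?_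
    · simpa [List.take_append_of_le_length (by omega : k + 1 ≤ l.length)] using
        hl k (by simp; omega)
    · have h := hl l.length (by simp)
      rwa [List.take_of_length_le (by simp), hset] at h

lemma image_le_eq_take_ofFn {n : ℕ} (π : Fin n → V) (i : Fin n) :
    π '' {j | j ≤ i} = {x | x ∈ (List.ofFn π).take (i + 1)} := by
  ext x
  simp only [Set.mem_image, Set.mem_ofPred_eq, List.mem_take_iff_getElem, List.getElem_ofFn,
    List.length_ofFn]
  constructor
  · rintro ⟨j, hj, rfl⟩
    exact ⟨j, by rw [Fin.le_def] at hj; omega, rfl⟩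
  · rintro ⟨j, hj, rfl⟩
    exact ⟨⟨j, by omega⟩, by rw [Fin.le_def]; simp; omega, rfl⟩

lemma exists_ordering_cutwidth [Fintype V] (G : SimpleGraph V) :
    ∃ π : Fin (Fintype.card V) ≃ V, ∀ i, cutCount G (π '' {j | j ≤ i}) ≤ cutwidth G := by
  have hne :
      {w | ∃ π : Fin (Fintype.card V) ≃ V, ∀ i, cutCount G (π '' {j | j ≤ i}) ≤ w}.Nonempty :=
    ⟨Nat.card (V × V), (Fintype.equivFin V).symm, fun _ => Set.ncard_le_card _⟩
  exact Nat.sInf_mem hne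

lemma cutwidth_le_iff_buildable_univ [Fintype V] :
    cutwidth G ≤ w ↔ Buildable G w Set.univ := by
  classical
  constructor
  · intro hw
    obtain ⟨π, hπ⟩ := exists_ordering_cutwidth G
    have h := buildable_of_list (G := G) (w := w) (List.ofFn π) fun k hk => by
      rw [List.length_ofFn] at hk
      rw [← image_le_eq_take_ofFn π ⟨k, hk⟩]
      exact (hπ _).trans hw
    convert h using 1
    ext x
    simpa [List.mem_ofFn] using π.surjective x
  · intro h
    obtain ⟨l, hnd, hl, hcut⟩ := h.exists_list
    let e := hnd.getEquivOfForallMemList l (Set.eq_univ_iff_forall.mp hl)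
    have hlen : l.length = Fintype.card V := by simpa using Fintype.card_congr e
    let π := (finCongr hlen).symm.trans e
    have hπ : List.ofFn π = l := List.ext_getElem (by simp [hlen]) fun i _ _ => by simp [π, e]
    refine Nat.sInf_le ⟨π, fun i => ?_⟩
    rw [image_le_eq_take_ofFn, hπ]
    exact hcut _

lemma buildable_univ_cutwidth [Fintype V] (G : SimpleGraph V) :
    Buildable G (cutwidth G) Set.univ :=
  cutwidth_le_iff_buildable_univ.mp le_rfl

lemma Buildable.exists_boundary {Ω : Set (Set V)} {A : Set V} (h : Buildable G w A)
    (h₀ : ∅ ∈ Ω) (hA : A ∉ Ω) :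
    ∃ S v, S ∈ Ω ∧ insert v S ∉ Ω ∧ cutCount G (insert v S) ≤ w ∧ cutCount G S ≤ w := by
  induction h with
  | empty => exact absurd h₀ hA
  | @step S v hS hv ih =>
    by_cases hSΩ : S ∈ Ω
    · exact ⟨S, v, hSΩ, hA, hv, hS.cutCount_le⟩
    · exact ih hSΩ

noncomputable def boundaryWidth (G : SimpleGraph V) (Ω : Set (Set V)) : ℕ :=
  sInf { w | ∃ (S₁ S₂ : Set V) (v : V), S₂ ∈ Ω ∧ S₁ ∉ Ω ∧ S₁ = insert v S₂ ∧
      w = max (cutCount G S₁) (cutCount G S₂) }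

lemma boundaryWidth_le_cutwidth [Fintype V] {Ω : Set (Set V)} (h₀ : ∅ ∈ Ω)
    (hU : Set.univ ∉ Ω) : boundaryWidth G Ω ≤ cutwidth G := by
  obtain ⟨S, v, hS, hvS, h₁, h₂⟩ :=
    (buildable_univ_cutwidth G).exists_boundary h₀ hU
  calc boundaryWidth G Ω ≤ max (cutCount G (insert v S)) (cutCount G S) :=
        Nat.sInf_le ⟨_, _, v, hS, hvS, rfl, rfl⟩
    _ ≤ cutwidth G := max_le h₁ h₂

lemma graphWidth_le_cutwidth [Fintype V] (G : SimpleGraph V) : graphWidth G ≤ cutwidth G := by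
  refine csSup_le' ?_
  rintro _ ⟨Ω, -, h₀, hU, rfl⟩
  exact boundaryWidth_le_cutwidth h₀ hU

lemma boundaryWidth_le_graphWidth [Fintype V] {Ω : Set (Set V)}
    (hΩ : ∀ S₁ S₂ : Set V, S₁ ⊆ S₂ → S₂ ∈ Ω → S₁ ∈ Ω) (h₀ : ∅ ∈ Ω) (hU : Set.univ ∉ Ω) :
    boundaryWidth G Ω ≤ graphWidth G := by
  refine le_csSup ⟨cutwidth G, ?_⟩ ⟨Ω, hΩ, h₀, hU, rfl⟩
  rintro _ ⟨Ω', -, h₀', hU', rfl⟩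
  exact boundaryWidth_le_cutwidth h₀' hU'

noncomputable def crusadePotential (G : SimpleGraph V) (r : ℕ) (X : ℕ → Set V) : ℕ ×ₗ ℕ :=
  toLex (∑ i ∈ Finset.range r, cutCount G (X i), ∑ i ∈ Finset.range r, (X i).ncard)

structure IsCrusade (G : SimpleGraph V) (w : ℕ) (A : Set V) (r : ℕ) (X : ℕ → Set V) : Prop where
  zero : X 0 = ∅
  eq_of_le : ∀ i, r ≤ i → X i = A
  diff_subsingleton : ∀ i, (X (i + 1) \ X i).Subsingleton
  cutCount_le : ∀ i, cutCount G (X i) ≤ w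

namespace IsCrusade

variable {A : Set V} {r : ℕ} {X : ℕ → Set V}

lemma extend {S T : Set V} (v : V) (h : IsCrusade G w S r X) (hTS : T ⊆ S)
    (hT : cutCount G T ≤ w) (hvT : cutCount G (insert v T) ≤ w) :
    IsCrusade G w (insert v T) (r + 2)
      (fun i => if i ≤ r then X i else if i = r + 1 then T else insert v T) where
  zero := by simp [h.zero]
  eq_of_le i hi := by simp [show ¬ i ≤ r by omega, show i ≠ r + 1 by omega]
  diff_subsingleton i := by
    rcases lt_trichotomy i r with hi | rfl | hi
    · simpa [hi.le, Nat.succ_le_of_lt hi] using h.diff_subsingleton i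
    · simp [Set.sdiff_eq_empty.mpr (h.eq_of_le i le_rfl ▸ hTS)]
    · simp only [show ¬ i ≤ r by omega, show ¬ i + 1 ≤ r by omega, if_false]
      split_ifs <;> first
        | omega
        | simp
        | exact Set.subsingleton_singleton.anti fun x hx =>
            (Set.mem_insert_iff.mp hx.1).resolve_right hx.2
  cutCount_le i := by split_ifs <;> first | exact h.cutCount_le i | assumption

lemma buildable_of_monotone (h : IsCrusade G w A r X) (hX : ∀ i, X i ⊆ X (i + 1)) :
    Buildable G w A := by
  have key : ∀ i, Buildable G w (X i) := by
    intro i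
    induction i with
    | zero => simpa [h.zero] using Buildable.empty
    | succ i ih =>
      rcases (h.diff_subsingleton i).eq_empty_or_singleton with hd | ⟨v, hv⟩
      · rwa [(Set.sdiff_eq_empty.mp hd).antisymm (hX i)]
      · have hXi : X (i + 1) = insert v (X i) := by
          rw [← Set.union_sdiff_cancel (hX i), hv, Set.union_singleton]
        exact hXi ▸ .step v ih (hXi ▸ h.cutCount_le _)
  simpa [h.eq_of_le r le_rfl] using key r

lemma update_succ {i : ℕ} {B : Set V} (h : IsCrusade G w A r X) (hi : i + 1 < r)
    (hB : cutCount G B ≤ w) (h₁ : B \ X i ⊆ X (i + 1) \ X i)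
    (h₂ : X (i + 1 + 1) \ B ⊆ X (i + 1 + 1) \ X (i + 1)) :
    IsCrusade G w A r (Function.update X (i + 1) B) where
  zero := by rw [Function.update_of_ne (by omega), h.zero]
  eq_of_le j hj := by rw [Function.update_of_ne (by omega), h.eq_of_le j hj]
  diff_subsingleton j := by
    rcases eq_or_ne j i with rfl | hji
    · rw [Function.update_self, Function.update_of_ne (by omega)]
      exact (h.diff_subsingleton j).anti h₁
    rcases eq_or_ne j (i + 1) with rfl | hji'
    · rw [Function.update_self, Function.update_of_ne (by omega)]
      exact (h.diff_subsingleton _).anti h₂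
    · rw [Function.update_of_ne (by omega), Function.update_of_ne hji']
      exact h.diff_subsingleton j
  cutCount_le j := by
    rw [Function.update_apply]
    split_ifs
    exacts [hB, h.cutCount_le j]

lemma exists_potential_lt [Finite V] (h : IsCrusade G w Set.univ r X) {i : ℕ}
    (hi : ¬ X i ⊆ X (i + 1)) :
    ∃ Y, IsCrusade G w Set.univ r Y ∧ crusadePotential G r Y < crusadePotential G r X := by
  have hir : i + 1 < r := by
    by_contra! hr
    exact hi (h.eq_of_le _ hr ▸ Set.subset_univ _)
  have hmem (j : ℕ) (hj : j ≤ i + 1) : j ∈ Finset.range r := Finset.mem_range.mpr (by omega)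
  simp only [crusadePotential, Prod.Lex.toLex_lt_toLex]
  by_cases hc : cutCount G (X i ∩ X (i + 1)) ≤ cutCount G (X i)
  · obtain ⟨k, rfl⟩ : ∃ k, i = k + 1 :=
      Nat.exists_eq_succ_of_ne_zero fun h0 => hi (h0 ▸ h.zero ▸ Set.empty_subset _)
    set B := X (k + 1) ∩ X (k + 1 + 1)
    refine ⟨_, h.update_succ (B := B) (by omega) (hc.trans (h.cutCount_le _))
      (fun x hx => ⟨hx.1.1, hx.2⟩) (fun x hx => ⟨hx.1, fun h' => hx.2 ⟨h', hx.1⟩⟩), ?_⟩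
    have hcard : B.ncard < (X (k + 1)).ncard :=
      Set.ncard_lt_ncard (Set.inter_subset_left.ssubset_of_not_subset fun h' => hi
        (h'.trans Set.inter_subset_right))
    have := Finset.sum_comp_update_add (cutCount G) X (hmem (k + 1) (by omega)) B
    have := Finset.sum_comp_update_add Set.ncard X (hmem (k + 1) (by omega)) B
    omega
  · have hsub := cutCount_union_add_cutCount_inter_le G (X i) (X (i + 1))
    refine ⟨_, h.update_succ (B := X i ∪ X (i + 1)) hir
      (by have := h.cutCount_le (i + 1); omega) (fun x hx => ⟨hx.1.resolve_left hx.2, hx.2⟩)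
      (fun x hx => ⟨hx.1, fun h' => hx.2 (Or.inr h')⟩), ?_⟩
    have := Finset.sum_comp_update_add (cutCount G) X (hmem _ le_rfl) (X i ∪ X (i + 1))
    omega

lemma exists_monotone [Finite V] (h : IsCrusade G w Set.univ r X) :
    ∃ Y, IsCrusade G w Set.univ r Y ∧ ∀ i, Y i ⊆ Y (i + 1) := by
  obtain ⟨p, hp⟩ : ∃ p, crusadePotential G r X = p := ⟨_, rfl⟩
  induction p using WellFoundedLT.induction generalizing X with
  | _ p ih =>
    by_cases hX : ∀ i, X i ⊆ X (i + 1)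
    · exact ⟨X, h, hX⟩
    · obtain ⟨i, hi⟩ := not_forall.mp hX
      obtain ⟨Y, hY, hlt⟩ := h.exists_potential_lt hi
      exact ih _ (hp ▸ hlt) hY rfl

end IsCrusade

lemma cutwidth_le_graphWidth [Fintype V] (G : SimpleGraph V) : cutwidth G ≤ graphWidth G := by
  cases hcw : cutwidth G with
  | zero => exact Nat.zero_le _
  | succ w =>
    let Ω : Set (Set V) := {S | ∃ T r X, S ⊆ T ∧ IsCrusade G w T r X}
    have hΩ (S₁ S₂ : Set V) (h : S₁ ⊆ S₂) : S₂ ∈ Ω → S₁ ∈ Ω :=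
      fun ⟨T, r, X, hS, hX⟩ => ⟨T, r, X, h.trans hS, hX⟩
    have h₀ : ∅ ∈ Ω :=
      ⟨∅, 0, fun _ => ∅, subset_rfl, ⟨rfl, fun _ _ => rfl, by simp, by simp [cutCount_empty]⟩⟩
    have hU : Set.univ ∉ Ω := by
      rintro ⟨T, r, X, hT, hX⟩
      obtain ⟨Y, hY, hmono⟩ := (Set.univ_subset_iff.mp hT ▸ hX).exists_monotone
      have := cutwidth_le_iff_buildable_univ.mpr (hY.buildable_of_monotone hmono)
      omega
    have hboundary (S : Set V) (v : V) (hS : S ∈ Ω) (hvS : insert v S ∉ Ω) :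
        w + 1 ≤ max (cutCount G (insert v S)) (cutCount G S) := by
      obtain ⟨T, r, X, hST, hX⟩ := hS
      by_contra! hlt
      exact hvS ⟨_, _, _, subset_rfl, hX.extend v hST (by omega) (by omega)⟩
    obtain ⟨S, v, hS, hvS, -⟩ :=
      (buildable_univ_cutwidth G).exists_boundary h₀ hU
    calc w + 1 ≤ boundaryWidth G Ω := by
          refine le_csInf ⟨_, _, _, v, hS, hvS, rfl, rfl⟩ ?_
          rintro _ ⟨_, S, v, hS, hvS, rfl, rfl⟩
          exact hboundary S v hS hvS
      _ ≤ graphWidth G := boundaryWidth_le_graphWidth hΩ h₀ hU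

end

/-- For any graph `G`, the cutwidth of `G` equals the width of `G`. -/
theorem cutwidth_eq_width {V : Type*} [Fintype V] (G : SimpleGraph V) :
    cutwidth G = graphWidth G :=
  (cutwidth_le_graphWidth G).antisymm (graphWidth_le_cutwidth G)
end

section
/- Let v be a degree-3 vertex with neighbors u₁, u₂, u₃ and let CFI(v) be the colored CFI gadget graph on v. For each pair of middle vertices m, m' of CFI(v), there is a unique color-preserving automorphism f of CFI(v) with f(m) = m'. Consequently the automorphism group of CFI(v) is isomorphic to the group of even-weight vectors in F₂³ (i.e., Z₂ × Z₂). -/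
open SimpleGraph

/-- Middle vertices of the CFI gadget: even-parity triples over the three neighbors. -/
abbrev CFIMid := {b : Fin 3 → Bool // (b 0 ^^ (b 1 ^^ b 2)) = false}

/-- Vertices of the CFI gadget at a degree-3 vertex: 4 middle vertices plus
3 pairs of edge vertices `(v,uᵢ)_b`. -/
abbrev CFIGadgetVert := CFIMid ⊕ (Fin 3 × Bool)

/-- The CFI gadget graph: middle vertex `v_{b₁,b₂,b₃}` is adjacent to the edge
vertex `(v,uᵢ)_{bᵢ}` for each `i`. -/
def CFIGadget : SimpleGraph CFIGadgetVert :=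
  SimpleGraph.fromRel fun a b =>
    match a, b with
    | .inl m, .inr (i, c) => m.1 i = c
    | _, _ => False

/-- Colors of the gadget: all middle vertices share one color (the color of `v`),
and the `i`-th pair of edge vertices gets its own color. -/
def CFIGadgetColor : CFIGadgetVert → Option (Fin 3) :=
  fun v => match v with
  | .inl _ => none
  | .inr (i, _) => some i

/-- Color-preserving automorphisms of the CFI gadget. -/
abbrev CFIGadgetAut := {f : CFIGadget ≃g CFIGadget // ∀ v, CFIGadgetColor (f v) = CFIGadgetColor v}

lemma cfiXor3 {x y z u v w : Bool} (h1 : (x ^^ (y ^^ z)) = false) (h2 : (u ^^ (v ^^ w)) = false) :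
    ((x ^^ u) ^^ ((y ^^ v) ^^ (z ^^ w))) = false := by
  revert x y z u v w; decide

lemma cfiXorCancel (a b c : Bool) : ((a ^^ c) = (b ^^ c)) ↔ (a = b) := by
  revert a b c; decide

lemma cfiXorABAB (a b : Bool) : (a ^^ (b ^^ (a ^^ b))) = false := by revert a b; decide

/-- The shift equivalence on vertices. -/
def cfiShiftEquiv (d : CFIMid) : CFIGadgetVert ≃ CFIGadgetVert where
  toFun v := match v with
    | .inl m => .inl ⟨fun i => m.1 i ^^ d.1 i, cfiXor3 m.2 d.2⟩
    | .inr (i, c) => .inr (i, c ^^ d.1 i)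
  invFun v := match v with
    | .inl m => .inl ⟨fun i => m.1 i ^^ d.1 i, cfiXor3 m.2 d.2⟩
    | .inr (i, c) => .inr (i, c ^^ d.1 i)
  left_inv := by
    rintro (m | ⟨i, c⟩)
    · simp only
      congr 1
      apply Subtype.ext; funext i
      simp [Bool.xor_assoc]
    · simp [Bool.xor_assoc]
  right_inv := by
    rintro (m | ⟨i, c⟩)
    · simp only
      congr 1
      apply Subtype.ext; funext i
      simp [Bool.xor_assoc]
    · simp [Bool.xor_assoc]

lemma cfiShiftEquiv_inl (d : CFIMid) (m : CFIMid) :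
    cfiShiftEquiv d (.inl m) = .inl ⟨fun i => m.1 i ^^ d.1 i, cfiXor3 m.2 d.2⟩ := rfl

lemma cfiShiftEquiv_inr (d : CFIMid) (i : Fin 3) (c : Bool) :
    cfiShiftEquiv d (.inr (i, c)) = .inr (i, c ^^ d.1 i) := rfl

/-- The shift automorphism. -/
def cfiShiftAut (d : CFIMid) : CFIGadgetAut := by
  refine ⟨⟨cfiShiftEquiv d, ?_⟩, ?_⟩
  · rintro (m | ⟨i, c⟩) (m' | ⟨j, c'⟩) <;>
      simp [cfiShiftEquiv, CFIGadget, fromRel_adj, cfiXorCancel]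
  · rintro (m | ⟨i, c⟩) <;> rfl

def cfiFd (f : CFIGadgetAut) (i : Fin 3) : Bool :=
  match f.1 (.inr (i, false)) with
  | .inr (_, b) => b
  | .inl _ => false

lemma cfiAut_inr_exists (f : CFIGadgetAut) (i : Fin 3) (c : Bool) :
    ∃ b, f.1 (.inr (i, c)) = .inr (i, b) := by
  have hc := f.2 (.inr (i, c))
  cases h : f.1 (.inr (i, c)) with
  | inl m => rw [h] at hc; simp [CFIGadgetColor] at hc
  | inr p =>
    obtain ⟨j, b⟩ := p
    rw [h] at hc
    simp [CFIGadgetColor] at hc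
    subst hc
    exact ⟨b, rfl⟩

lemma cfiAut_inr_false (f : CFIGadgetAut) (i : Fin 3) :
    f.1 (.inr (i, false)) = .inr (i, cfiFd f i) := by
  obtain ⟨b, h⟩ := cfiAut_inr_exists f i false
  unfold cfiFd
  rw [h]

lemma cfiAut_inr (f : CFIGadgetAut) (i : Fin 3) (c : Bool) :
    f.1 (.inr (i, c)) = .inr (i, (c ^^ cfiFd f i)) := by
  cases c
  · simpa using cfiAut_inr_false f i
  · obtain ⟨b, h⟩ := cfiAut_inr_exists f i true
    have hne : b ≠ cfiFd f i := by
      intro hb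
      have : f.1 (.inr (i, true)) = f.1 (.inr (i, false)) := by
        rw [h, cfiAut_inr_false f i, hb]
      have := f.1.toEquiv.injective this
      simp at this
    have hb : b = (true ^^ cfiFd f i) := by
      revert hne; cases b <;> cases cfiFd f i <;> decide
    rw [h, hb]

lemma cfiAut_inl (f : CFIGadgetAut) (m : CFIMid) :
    ∃ m' : CFIMid, f.1 (.inl m) = .inl m' ∧ ∀ i, m'.1 i = (m.1 i ^^ cfiFd f i) := by
  have hc := f.2 (.inl m)
  cases h : f.1 (.inl m) with
  | inr p => rw [h] at hc; obtain ⟨j, b⟩ := p; simp [CFIGadgetColor] at hc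
  | inl m' =>
    refine ⟨m', rfl, fun i => ?_⟩
    have hadj : CFIGadget.Adj (.inl m) (.inr (i, m.1 i)) := by
      rw [CFIGadget, fromRel_adj]
      exact ⟨by simp, Or.inl rfl⟩
    have := f.1.map_adj_iff.mpr hadj
    rw [h, cfiAut_inr f i] at this
    rw [CFIGadget, fromRel_adj] at this
    rcases this.2 with h' | h'
    · exact h'
    · exact absurd h' (by simp)

lemma cfiFd_parity (f : CFIGadgetAut) :
    (cfiFd f 0 ^^ (cfiFd f 1 ^^ cfiFd f 2)) = false := by
  obtain ⟨m', _, h2⟩ := cfiAut_inl f ⟨fun _ => false, by decide⟩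
  have hp := m'.2
  rw [h2 0, h2 1, h2 2] at hp
  simpa using hp

def cfiFdMid (f : CFIGadgetAut) : CFIMid := ⟨cfiFd f, cfiFd_parity f⟩

lemma cfiAut_eq_shift (f : CFIGadgetAut) : f = cfiShiftAut (cfiFdMid f) := by
  apply Subtype.ext
  apply RelIso.ext
  rintro (m | ⟨i, c⟩)
  · obtain ⟨m', h1, h2⟩ := cfiAut_inl f m
    show f.1 (.inl m) = cfiShiftEquiv _ (.inl m)
    rw [h1, cfiShiftEquiv_inl]
    congr 1
    exact Subtype.ext (funext h2)
  · show f.1 (.inr (i, c)) = cfiShiftEquiv _ (.inr (i, c))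
    rw [cfiAut_inr, cfiShiftEquiv_inr]
    rfl

lemma cfiFd_shift (d : CFIMid) (i : Fin 3) : cfiFd (cfiShiftAut d) i = d.1 i := by
  unfold cfiFd
  have : (cfiShiftAut d).1 (.inr (i, false)) = .inr (i, d.1 i) := by
    show cfiShiftEquiv d (.inr (i, false)) = _
    rw [cfiShiftEquiv_inr]; simp
  rw [this]

def cfiB2Z (b : Bool) : ZMod 2 := cond b 1 0
def cfiZ2B (x : ZMod 2) : Bool := decide (x = 1)

lemma cfiB2Z_xor (a b : Bool) : cfiB2Z (a ^^ b) = cfiB2Z a + cfiB2Z b := by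
  cases a <;> cases b <;> decide
lemma cfiZ2B_B2Z (b : Bool) : cfiZ2B (cfiB2Z b) = b := by cases b <;> decide
lemma cfiB2Z_Z2B (x : ZMod 2) : cfiB2Z (cfiZ2B x) = x := by revert x; decide

def cfiEncode (f : CFIGadgetAut) : ZMod 2 × ZMod 2 := (cfiB2Z (cfiFd f 0), cfiB2Z (cfiFd f 1))

def cfiDecodeMid (p : ZMod 2 × ZMod 2) : CFIMid :=
  ⟨![cfiZ2B p.1, cfiZ2B p.2, cfiZ2B p.1 ^^ cfiZ2B p.2], by
    simpa using cfiXorABAB (cfiZ2B p.1) (cfiZ2B p.2)⟩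

def cfiDecode (p : ZMod 2 × ZMod 2) : CFIGadgetAut := cfiShiftAut (cfiDecodeMid p)

lemma cfiDecode_encode (f : CFIGadgetAut) : cfiDecode (cfiEncode f) = f := by
  conv_rhs => rw [cfiAut_eq_shift f]
  unfold cfiDecode
  apply congrArg
  apply Subtype.ext; funext i
  show (cfiDecodeMid (cfiEncode f)).1 i = cfiFd f i
  fin_cases i
  · simpa [cfiDecodeMid, cfiEncode] using cfiZ2B_B2Z (cfiFd f 0)
  · simpa [cfiDecodeMid, cfiEncode] using cfiZ2B_B2Z (cfiFd f 1)
  · show (cfiZ2B (cfiB2Z (cfiFd f 0)) ^^ cfiZ2B (cfiB2Z (cfiFd f 1))) = cfiFd f 2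
    rw [cfiZ2B_B2Z, cfiZ2B_B2Z]
    have := cfiFd_parity f
    revert this
    cases cfiFd f 0 <;> cases cfiFd f 1 <;> cases cfiFd f 2 <;> decide

lemma cfiEncode_decode (p : ZMod 2 × ZMod 2) : cfiEncode (cfiDecode p) = p := by
  unfold cfiEncode cfiDecode
  rw [cfiFd_shift, cfiFd_shift]
  show (cfiB2Z (cfiZ2B p.1), cfiB2Z (cfiZ2B p.2)) = p
  rw [cfiB2Z_Z2B, cfiB2Z_Z2B]


/-- For each pair of middle vertices `m, m'` of the CFI gadget there is a unique
color-preserving automorphism sending `m` to `m'`; consequently, the group of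
color-preserving automorphisms is isomorphic to the even-weight vectors of `F₂³`,
i.e. to `Z₂ × Z₂`. -/
theorem cfi_gadget_automorphisms :
    (∀ m m' : CFIMid, ∃! f : CFIGadgetAut, f.1 (Sum.inl m) = Sum.inl m') ∧
    (∃ e : CFIGadgetAut ≃ (ZMod 2 × ZMod 2),
      ∀ (f g : CFIGadgetAut) (h : ∀ v, CFIGadgetColor ((f.1.trans g.1) v) = CFIGadgetColor v),
        e ⟨f.1.trans g.1, h⟩ = e f + e g) := by
  constructor
  · intro m m'
    refine ⟨cfiShiftAut ⟨fun i => m.1 i ^^ m'.1 i, cfiXor3 m.2 m'.2⟩, ?_, ?_⟩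
    · show cfiShiftEquiv _ (.inl m) = _
      rw [cfiShiftEquiv_inl]
      congr 1
      apply Subtype.ext; funext i
      show (m.1 i ^^ (m.1 i ^^ m'.1 i)) = m'.1 i
      simp [← Bool.xor_assoc]
    · intro g hg
      rw [cfiAut_eq_shift g]
      apply congrArg
      obtain ⟨m'', h1, h2⟩ := cfiAut_inl g m
      rw [h1] at hg
      apply Subtype.ext; funext i
      show cfiFd g i = (m.1 i ^^ m'.1 i)
      have hm : m''.1 i = m'.1 i := by rw [Sum.inl.injEq] at hg; rw [hg]
      rw [h2 i] at hm
      rw [← hm]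
      simp [← Bool.xor_assoc]
  · refine ⟨⟨cfiEncode, cfiDecode, cfiDecode_encode, cfiEncode_decode⟩, ?_⟩
    intro f g h
    have key : ∀ i, cfiFd ⟨f.1.trans g.1, h⟩ i = (cfiFd f i ^^ cfiFd g i) := by
      intro i
      unfold cfiFd
      have : (f.1.trans g.1) (.inr (i, false)) = .inr (i, ((false ^^ cfiFd f i) ^^ cfiFd g i)) := by
        show g.1 (f.1 (.inr (i, false))) = _
        rw [cfiAut_inr f, cfiAut_inr g]
      rw [this, cfiAut_inr_false f, cfiAut_inr_false g]
      simp
    show cfiEncode _ = cfiEncode f + cfiEncode g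
    unfold cfiEncode
    rw [key 0, key 1, cfiB2Z_xor, cfiB2Z_xor]
    rfl
end

section
/- Let G be a graph with minimum degree at least 3 and maximum degree s, and let Cl(G) be its clustering. Then Ex(Cl(G)) ≥ (1/s)·Ex(G). -/
/-!
Identify a vertex set `T` of `Cl(G)` with a set of directed edges of `G`, and let `a u`, `b u` be
the numbers of edges leaving `u` inside and outside `T`. The cut of `T` contains the `a u * b u`
edges inside each clique and the matching edges `(e, e.rev)` with `e ∈ T`, `e.rev ∉ T`; call the
number of the latter `M`. Let `S` be the set of vertices where `T` holds at least half of the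
clique. An edge of `G` leaving `S` is either outside `T` at its end in `S`, or in `T` at its end
outside `S`, or a matching edge of the cut, so `cut_G S ≤ M + ∑_{S} b + ∑_{Sᶜ} a`. As degrees are
at least `3`, the minority count at each vertex is at most half of `a u * b u`, whence
`2 (∑_{S} b + ∑_{Sᶜ} a) ≤ ∑ a * b`. Together with `Ex(G) * min |S| |Sᶜ| ≤ cut_G S`, the bound
`s` on the clique sizes and `Ex(G) ≤ s`, this gives `Ex(G) * min |T| |Tᶜ| ≤ s * cut T`.
-/

open SimpleGraph

noncomputable def expSet {V : Type*} (G : SimpleGraph V) (S : Set V) : ℝ :=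
  (cutCount G S : ℝ) / (min S.ncard Sᶜ.ncard : ℕ)

noncomputable def expG {V : Type*} (G : SimpleGraph V) : ℝ :=
  ⨅ S : {S : Set V // S.Nonempty ∧ S ≠ Set.univ}, expSet G S.1

/-- Vertices of the clustering `Cl(G)`: the directed edges of `G`. -/
def ClVert {V : Type*} (G : SimpleGraph V) : Type _ := {p : V × V // G.Adj p.1 p.2}

/-- The clustering `Cl(G)` of `G`: each vertex `u` becomes a clique on its incident
directed edges `(u,v)`, and `(u,v)` is joined to `(v,u)` for each edge of `G`. -/
def clustering {V : Type*} (G : SimpleGraph V) : SimpleGraph (ClVert G) :=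
  SimpleGraph.fromRel fun a b =>
    (a.1.1 = b.1.2 ∧ a.1.2 = b.1.1) ∨ a.1.1 = b.1.1

open Finset

section Expansion

variable {W : Type*} (H : SimpleGraph W)

lemma expSet_nonneg (S : Set W) : 0 ≤ expSet H S := by
  unfold expSet
  positivity

lemma expG_nonneg : 0 ≤ expG H :=
  Real.iInf_nonneg fun _ => expSet_nonneg H _

lemma expG_le_expSet {S : Set W} (hS : S.Nonempty) (hSu : S ≠ Set.univ) :
    expG H ≤ expSet H S :=
  ciInf_le (f := fun T : {S : Set W // S.Nonempty ∧ S ≠ Set.univ} => expSet H T.1)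
    ⟨0, by rintro _ ⟨T, rfl⟩; exact expSet_nonneg H _⟩ ⟨S, hS, hSu⟩

lemma expG_eq_zero_of_subsingleton [Subsingleton W] : expG H = 0 := by
  have : IsEmpty {S : Set W // S.Nonempty ∧ S ≠ Set.univ} :=
    ⟨fun ⟨_, hS, hSu⟩ => hSu hS.eq_univ⟩
  exact Real.iInf_of_isEmpty _

variable [Fintype W]

lemma expG_mul_min_le_cutCount (S : Set W) :
    expG H * (min S.ncard Sᶜ.ncard : ℕ) ≤ cutCount H S := by
  rcases Nat.eq_zero_or_pos (min S.ncard Sᶜ.ncard) with h | h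
  · simp [h]
  have hS : S.Nonempty := Set.nonempty_of_ncard_ne_zero (lt_min_iff.1 h).1.ne'
  have hSu : S ≠ Set.univ := fun hu => by simp [hu] at h
  have := expG_le_expSet H hS hSu
  rwa [expSet, le_div_iff₀ (by exact_mod_cast h)] at this

lemma le_expG_of_mul_min_le [Nontrivial W] {c : ℝ}
    (h : ∀ S : Set W, c * (min S.ncard Sᶜ.ncard : ℕ) ≤ cutCount H S) : c ≤ expG H := by
  have : Nonempty {S : Set W // S.Nonempty ∧ S ≠ Set.univ} :=
    let x : W := Classical.arbitrary W
    ⟨⟨{x}, Set.singleton_nonempty x, Set.singleton_ne_univ x⟩⟩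
  refine le_ciInf (f := fun S : {S : Set W // S.Nonempty ∧ S ≠ Set.univ} => expSet H S.1)
    fun ⟨S, hS, hSu⟩ => ?_
  have hpos : 0 < min S.ncard Sᶜ.ncard :=
    lt_min ((Set.ncard_pos S.toFinite).2 hS)
      ((Set.ncard_pos Sᶜ.toFinite).2 (Set.nonempty_compl.2 hSu))
  exact (le_div_iff₀ (by exact_mod_cast hpos)).2 (h S)

lemma cutCount_coe_finset [DecidableEq W] [DecidableRel H.Adj] (S : Finset W) :
    cutCount H S = ∑ x ∈ S, #{y ∈ Sᶜ | H.Adj x y} := by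
  have : {p : W × W | p.1 ∈ (S : Set W) ∧ p.2 ∉ (S : Set W) ∧ H.Adj p.1 p.2} =
      ↑{p ∈ S ×ˢ Sᶜ | H.Adj p.1 p.2} := by
    ext; simp [and_assoc]
  rw [cutCount, this, Set.ncard_coe_finset, card_filter, sum_product]
  simp only [card_filter]

lemma cutCount_singleton [DecidableRel H.Adj] (v : W) : cutCount H {v} = H.degree v := by
  classical
  have := cutCount_coe_finset H {v}
  rw [coe_singleton] at this
  rw [this, sum_singleton, ← card_neighborFinset_eq_degree]
  congr 1
  ext w
  simpa using fun h => (H.ne_of_adj h).symm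

lemma expG_le_degree [DecidableRel H.Adj] {v w : W} (hvw : v ≠ w) : expG H ≤ H.degree v := by
  have hmin : min ({v} : Set W).ncard ({v}ᶜ : Set W).ncard = 1 := by
    rw [Set.ncard_singleton]
    exact min_eq_left ((Set.ncard_pos (Set.toFinite _)).2 ⟨w, hvw.symm⟩)
  have := expG_mul_min_le_cutCount H {v}
  rwa [hmin, cutCount_singleton, Nat.cast_one, mul_one] at this

end Expansion

lemma two_mul_le_mul_of_add_le_two_mul {a b : ℕ} (h3 : 3 ≤ a + b) (h : a + b ≤ 2 * a) :
    2 * b ≤ a * b :=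
  Nat.mul_le_mul_right b (by omega)

lemma mul_min_le_of_majority_split {E s aS aC bS bC nS nC m X : ℝ} (hE : 0 ≤ E) (hEs : E ≤ s)
    (haS : aS ≤ nS * s) (hbC : bC ≤ nC * s) (hcut : E * min nS nC ≤ m + bS + aC)
    (hX : 2 * (bS + aC) ≤ X) (haC : 0 ≤ aC) (hbS : 0 ≤ bS) :
    E * min (aS + aC) (bS + bC) ≤ s * (X + m) := by
  have hs : 0 ≤ s := hE.trans hEs
  rcases le_total nS nC with h | h
  · rw [min_eq_left h] at hcut
    calc E * min (aS + aC) (bS + bC) ≤ E * aS + E * aC := by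
          nlinarith [min_le_left (aS + aC) (bS + bC)]
      _ ≤ s * (E * nS) + s * aC := by
          nlinarith [mul_le_mul_of_nonneg_left haS hE, mul_le_mul_of_nonneg_right hEs haC]
      _ ≤ s * (X + m) := by nlinarith [mul_le_mul_of_nonneg_left hcut hs]
  · rw [min_eq_right h] at hcut
    calc E * min (aS + aC) (bS + bC) ≤ E * bS + E * bC := by
          nlinarith [min_le_right (aS + aC) (bS + bC)]
      _ ≤ s * bS + s * (E * nC) := by
          nlinarith [mul_le_mul_of_nonneg_left hbC hE, mul_le_mul_of_nonneg_right hEs hbS]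
      _ ≤ s * (X + m) := by nlinarith [mul_le_mul_of_nonneg_left hcut hs]

namespace ClVert

variable {V : Type*} {G : SimpleGraph V}

instance [Fintype V] [DecidableRel G.Adj] : Fintype (ClVert G) :=
  inferInstanceAs (Fintype {p : V × V // G.Adj p.1 p.2})

instance [DecidableEq V] : DecidableEq (ClVert G) :=
  inferInstanceAs (DecidableEq {p : V × V // G.Adj p.1 p.2})

def rev (e : ClVert G) : ClVert G := ⟨(e.1.2, e.1.1), e.2.symm⟩

@[simp] lemma rev_rev (e : ClVert G) : e.rev.rev = e := rfl

lemma rev_fst (e : ClVert G) : e.rev.1.1 = e.1.2 := rfl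

lemma fst_ne_snd (e : ClVert G) : e.1.1 ≠ e.1.2 := G.ne_of_adj e.2

lemma clustering_adj_rev (e : ClVert G) : (clustering G).Adj e e.rev := by
  refine (fromRel_adj _ _ _).2 ⟨fun h => e.fst_ne_snd ?_, Or.inl (Or.inl ⟨rfl, rfl⟩)⟩
  exact congrArg (fun f : ClVert G => f.1.1) h

lemma clustering_adj_of_fst_eq {e f : ClVert G} (hef : e ≠ f) (h : e.1.1 = f.1.1) :
    (clustering G).Adj e f :=
  (fromRel_adj _ _ _).2 ⟨hef, Or.inl (Or.inr h)⟩

end ClVert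

section Clustering

variable {V : Type*} [DecidableEq V] {G : SimpleGraph V}

def clusterCount (T : Finset (ClVert G)) (u : V) : ℕ := #{e ∈ T | e.1.1 = u}

lemma sum_clusterCount (T : Finset (ClVert G)) (S : Finset V) :
    ∑ u ∈ S, clusterCount T u = #{e ∈ T | e.1.1 ∈ S} :=
  sum_card_fiberwise_eq_card_filter _ _ _

variable [Fintype V] [DecidableRel G.Adj]

lemma card_cluster (u : V) : #{e : ClVert G | e.1.1 = u} = G.degree u := by
  rw [← card_neighborFinset_eq_degree]
  refine card_bij' (fun e _ => e.1.2) (fun w hw => ⟨(u, w), (mem_neighborFinset _ _ _).1 hw⟩)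
    ?_ ?_ ?_ ?_
  · intro e he
    rw [mem_filter] at he
    simpa [← he.2] using e.2
  · exact fun w _ => mem_filter.2 ⟨mem_univ _, rfl⟩
  · intro e he
    rw [mem_filter] at he
    exact Subtype.ext (Prod.ext he.2.symm rfl)
  · simp

lemma clusterCount_add_clusterCount_compl (T : Finset (ClVert G)) (u : V) :
    clusterCount T u + clusterCount Tᶜ u = G.degree u := by
  rw [clusterCount, clusterCount, ← card_union_of_disjoint
    (disjoint_filter_filter disjoint_compl_right), ← filter_union, union_compl, card_cluster]

lemma card_filter_fst_mem_le {s : ℕ} (hmax : ∀ v, G.degree v ≤ s) (T : Finset (ClVert G))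
    (S : Finset V) : #{e ∈ T | e.1.1 ∈ S} ≤ #S * s := by
  rw [← sum_clusterCount]
  refine sum_le_card_nsmul _ _ _ fun u _ => ?_
  exact ((Nat.le_add_right _ _).trans (clusterCount_add_clusterCount_compl T u).le).trans (hmax u)

lemma sum_mul_add_card_le_cutCount_clustering (T : Finset (ClVert G)) :
    ∑ u, clusterCount T u * clusterCount Tᶜ u + #{e ∈ T | e.rev ∉ T} ≤
      cutCount (clustering G) T := by
  classical
  have hlocal : ∀ e ∈ T, clusterCount Tᶜ e.1.1 + (if e.rev ∉ T then 1 else 0) ≤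
      #{f ∈ Tᶜ | (clustering G).Adj e f} := by
    intro e he
    have hdisj : Disjoint {f ∈ Tᶜ | f.1.1 = e.1.1} {f ∈ Tᶜ | f = e.rev} :=
      disjoint_filter.2 fun f _ hf hrev => e.fst_ne_snd (hf.symm.trans (hrev ▸ e.rev_fst))
    have hsub : {f ∈ Tᶜ | f.1.1 = e.1.1} ∪ {f ∈ Tᶜ | f = e.rev} ⊆
        {f ∈ Tᶜ | (clustering G).Adj e f} := by
      intro f hf
      simp only [← filter_or, mem_filter, mem_compl] at hf ⊢
      refine ⟨hf.1, hf.2.elim (fun h => ?_) fun h => h ▸ e.clustering_adj_rev⟩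
      exact ClVert.clustering_adj_of_fst_eq (fun hef => hf.1 (hef ▸ he)) h.symm
    calc clusterCount Tᶜ e.1.1 + (if e.rev ∉ T then 1 else 0)
        = #({f ∈ Tᶜ | f.1.1 = e.1.1} ∪ {f ∈ Tᶜ | f = e.rev}) := by
          rw [card_union_of_disjoint hdisj, filter_eq']
          by_cases hrev : e.rev ∈ T <;> simp [hrev, clusterCount]
      _ ≤ _ := card_le_card hsub
  have hfiber : ∑ e ∈ T, clusterCount Tᶜ e.1.1 = ∑ u, clusterCount T u * clusterCount Tᶜ u := by
    rw [← sum_fiberwise T (fun e => e.1.1)]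
    refine sum_congr rfl fun u _ => ?_
    rw [sum_congr rfl fun e he => by rw [(mem_filter.1 he).2], sum_const, smul_eq_mul]
    rfl
  calc ∑ u, clusterCount T u * clusterCount Tᶜ u + #{e ∈ T | e.rev ∉ T}
      = ∑ e ∈ T, (clusterCount Tᶜ e.1.1 + if e.rev ∉ T then 1 else 0) := by
        rw [sum_add_distrib, card_filter, hfiber]
    _ ≤ ∑ e ∈ T, #{f ∈ Tᶜ | (clustering G).Adj e f} := sum_le_sum hlocal
    _ = cutCount (clustering G) T := (cutCount_coe_finset _ T).symm

lemma cutCount_le_card_filter_add (T : Finset (ClVert G)) (S : Finset V) :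
    cutCount G S ≤
      #{e ∈ T | e.rev ∉ T} + #{e ∈ Tᶜ | e.1.1 ∈ S} + #{e ∈ T | e.1.1 ∈ Sᶜ} := by
  have hcut : cutCount G S = #{e : ClVert G | e.1.1 ∈ S ∧ e.1.2 ∉ S} := by
    have : {p : V × V | p.1 ∈ (S : Set V) ∧ p.2 ∉ (S : Set V) ∧ G.Adj p.1 p.2} =
        (fun e : ClVert G => e.1) ''
          (({e : ClVert G | e.1.1 ∈ S ∧ e.1.2 ∉ S} : Finset (ClVert G)) : Set (ClVert G)) := by
      ext p
      constructor
      · rintro ⟨h1, h2, h⟩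
        exact ⟨⟨p, h⟩, by simpa using ⟨h1, h2⟩, rfl⟩
      · rintro ⟨e, he, rfl⟩
        simp only [coe_filter, mem_univ, true_and, Set.mem_ofPred_eq] at he
        exact ⟨he.1, he.2, e.2⟩
    rw [cutCount, this]
    exact (Set.ncard_image_of_injective _ Subtype.val_injective).trans (Set.ncard_coe_finset _)
  have hsub : ({e : ClVert G | e.1.1 ∈ S ∧ e.1.2 ∉ S} : Finset (ClVert G)) ⊆ {e ∈ T | e.rev ∉ T} ∪
      {e ∈ Tᶜ | e.1.1 ∈ S} ∪ {e ∈ T | e.1.1 ∈ Sᶜ}.image ClVert.rev := by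
    intro e he
    rw [mem_filter] at he
    simp only [mem_union, mem_filter, mem_compl, mem_image]
    by_cases heT : e ∈ T
    · by_cases hrev : e.rev ∈ T
      · exact Or.inr ⟨e.rev, ⟨hrev, he.2.2⟩, e.rev_rev⟩
      · exact Or.inl (Or.inl ⟨heT, hrev⟩)
    · exact Or.inl (Or.inr ⟨heT, he.2.1⟩)
  rw [hcut]
  calc _ ≤ _ := card_le_card hsub
    _ ≤ _ := card_union_le _ _
    _ ≤ _ := add_le_add (card_union_le _ _) card_image_le

def majority (T : Finset (ClVert G)) : Finset V := {u | G.degree u ≤ 2 * clusterCount T u}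

lemma two_mul_add_le_sum_mul (hmin : ∀ v, 3 ≤ G.degree v) (T : Finset (ClVert G)) :
    2 * (#{e ∈ Tᶜ | e.1.1 ∈ majority T} + #{e ∈ T | e.1.1 ∈ (majority T)ᶜ}) ≤
      ∑ u, clusterCount T u * clusterCount Tᶜ u := by
  rw [← sum_clusterCount, ← sum_clusterCount, mul_add,
    mul_sum, mul_sum, ← sum_add_sum_compl (majority T)]
  refine add_le_add (sum_le_sum fun u hu => ?_) (sum_le_sum fun u hu => ?_)
  · have hdeg := clusterCount_add_clusterCount_compl T u
    refine two_mul_le_mul_of_add_le_two_mul (hdeg ▸ hmin u) ?_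
    simpa [majority, hdeg] using hu
  · have hdeg := clusterCount_add_clusterCount_compl T u
    have := hmin u
    rw [mul_comm (clusterCount T u)]
    refine two_mul_le_mul_of_add_le_two_mul (by omega) ?_
    simp only [majority, mem_compl, mem_filter, mem_univ, true_and, not_le] at hu
    omega

theorem expG_mul_min_card_le_mul_cutCount_clustering {s : ℕ} (hmin : ∀ v, 3 ≤ G.degree v)
    (hmax : ∀ v, G.degree v ≤ s) (hEs : expG G ≤ s) (T : Finset (ClVert G)) :
    expG G * (min #T #Tᶜ : ℕ) ≤ s * cutCount (clustering G) T := by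
  set S := majority T
  have hsplit (T' : Finset (ClVert G)) :
      #T' = #{e ∈ T' | e.1.1 ∈ S} + #{e ∈ T' | e.1.1 ∈ Sᶜ} := by
    rw [← sum_clusterCount, ← sum_clusterCount, sum_add_sum_compl, sum_clusterCount,
      filter_true_of_mem fun _ _ => mem_univ _]
  have hmajority : expG G * min (#S : ℝ) #Sᶜ ≤ (#{e ∈ T | e.rev ∉ T} : ℝ) +
      #{e ∈ Tᶜ | e.1.1 ∈ S} + #{e ∈ T | e.1.1 ∈ Sᶜ} := by
    have h := expG_mul_min_le_cutCount G S
    rw [Set.ncard_coe_finset, ← coe_compl, Set.ncard_coe_finset, Nat.cast_min] at h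
    exact h.trans (by exact_mod_cast cutCount_le_card_filter_add T S)
  have hT : (#{e ∈ T | e.1.1 ∈ S} : ℝ) ≤ #S * s := by
    exact_mod_cast card_filter_fst_mem_le hmax T S
  have hTc : (#{e ∈ Tᶜ | e.1.1 ∈ Sᶜ} : ℝ) ≤ #Sᶜ * s := by
    exact_mod_cast card_filter_fst_mem_le hmax Tᶜ Sᶜ
  have hX : 2 * ((#{e ∈ Tᶜ | e.1.1 ∈ S} : ℝ) + #{e ∈ T | e.1.1 ∈ Sᶜ}) ≤
      ((∑ u, clusterCount T u * clusterCount Tᶜ u : ℕ) : ℝ) := by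
    exact_mod_cast two_mul_add_le_sum_mul hmin T
  have hcut : ((∑ u, clusterCount T u * clusterCount Tᶜ u : ℕ) : ℝ) + #{e ∈ T | e.rev ∉ T} ≤
      cutCount (clustering G) T := by
    exact_mod_cast sum_mul_add_card_le_cutCount_clustering T
  rw [hsplit T, hsplit Tᶜ, Nat.cast_min, Nat.cast_add, Nat.cast_add]
  refine (mul_min_le_of_majority_split (expG_nonneg G) hEs hT hTc hmajority hX
    (Nat.cast_nonneg _) (Nat.cast_nonneg _)).trans ?_
  exact mul_le_mul_of_nonneg_left hcut (Nat.cast_nonneg _)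

end Clustering

/-- If `G` has minimum degree at least 3 and maximum degree at most `s`, then
`Ex(Cl(G)) ≥ (1/s)·Ex(G)`. -/
theorem clustering_expansion {V : Type*} [Fintype V] (G : SimpleGraph V)
    [DecidableRel G.Adj] (s : ℕ)
    (hdeg : ∀ v, 3 ≤ G.degree v ∧ G.degree v ≤ s) :
    expG G / s ≤ expG (clustering G) := by
  classical
  rcases isEmpty_or_nonempty V with hV | ⟨⟨v⟩⟩
  · rw [expG_eq_zero_of_subsingleton, zero_div]
    exact expG_nonneg _
  have hv := hdeg v
  obtain ⟨w, hvw⟩ : (G.neighborFinset v).Nonempty := by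
    rw [← card_pos, card_neighborFinset_eq_degree]
    omega
  rw [mem_neighborFinset] at hvw
  have hs : (0 : ℝ) < s := by exact_mod_cast (by omega : 0 < s)
  have hEs : expG G ≤ s := (expG_le_degree G hvw.ne).trans (by exact_mod_cast hv.2)
  have : Nontrivial (ClVert G) :=
    ⟨⟨⟨(v, w), hvw⟩, ⟨(w, v), hvw.symm⟩, fun h => hvw.ne (congrArg (·.1.1) h)⟩⟩
  refine le_expG_of_mul_min_le _ fun T => ?_
  lift T to Finset (ClVert G) using T.toFinite
  rw [Set.ncard_coe_finset, ← coe_compl, Set.ncard_coe_finset, div_mul_eq_mul_div,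
    div_le_iff₀ hs, mul_comm _ (s : ℝ)]
  exact expG_mul_min_card_le_mul_cutCount_clustering (fun v => (hdeg v).1) (fun v => (hdeg v).2)
    hEs T
end

section
/- Let π₁,...,π_k be isomorphisms from graph G to graph H and p₁,...,p_k a probability distribution. Define, for each partial isomorphism σ, the vector v_σ ∈ R^k with i-th coordinate √(p_i) if π_i extends σ and 0 otherwise. Then these vectors satisfy the level-r Lasserre constraints for graph isomorphism: ||v_∅|| = 1; Σ_{i',j'} ⟨v_{i→i'}, v_{j→j'}⟩ B_{i'j'} = A_{ij} for all i,j; ⟨v_{σ₁}, v_{σ₂}⟩ = ⟨v_{σ₁'}, v_{σ₂'}⟩ whenever σ₁∧σ₂ = σ₁'∧σ₂'; and v_σ = Σ_{i'} v_{σ∧(i→i')} for each vertex i, as well as v_σ = Σ_i v_{σ∧(i→i')} for each vertex i'. -/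
open SimpleGraph

attribute [local instance] Classical.propDecidable

noncomputable section

variable {n k : ℕ}

/-- `π` (a full map) extends the partial map `σ`. -/
def ExtendsMap (π : Fin n → Fin n) (σ : Fin n → Option (Fin n)) : Prop :=
  ∀ j a, σ j = some a → π j = a

/-- Two partial maps are consistent: they agree where both are defined and their
union is injective. -/
def ConsistentMaps (σ₁ σ₂ : Fin n → Option (Fin n)) : Prop :=
  (∀ i a b, σ₁ i = some a → σ₂ i = some b → a = b) ∧
  (∀ i j a, σ₁ i = some a → σ₂ j = some a → i = j)

/-- The join `σ₁ ∧ σ₂` of two partial maps. -/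
def joinMaps (σ₁ σ₂ : Fin n → Option (Fin n)) : Fin n → Option (Fin n) :=
  fun i => (σ₁ i).orElse (fun _ => σ₂ i)

/-- The partial map defined only at `i`, with value `i'`. -/
def singleMap (i i' : Fin n) : Fin n → Option (Fin n) :=
  fun j => if j = i then some i' else none

/-- The domain size of a partial map. -/
def domSize (σ : Fin n → Option (Fin n)) : ℕ := {j | σ j ≠ none}.ncard

lemma extends_join_iff {π : Fin n → Fin n} (hπ : Function.Injective π)
    (σ₁ σ₂ : Fin n → Option (Fin n)) :
    (ExtendsMap π σ₁ ∧ ExtendsMap π σ₂) ↔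
      (ConsistentMaps σ₁ σ₂ ∧ ExtendsMap π (joinMaps σ₁ σ₂)) := by
  constructor
  · rintro ⟨h1, h2⟩
    refine ⟨⟨fun i a b ha hb => ?_, fun i j a ha hb => ?_⟩, fun j a hj => ?_⟩
    · rw [← h1 i a ha, ← h2 i b hb]
    · exact hπ (by rw [h1 i a ha, h2 j a hb])
    · unfold joinMaps at hj
      cases h : σ₁ j with
      | none => rw [h] at hj; exact h2 j a (by simpa using hj)
      | some b => rw [h] at hj; simp at hj; subst hj; exact h1 j _ h
  · rintro ⟨⟨hc1, _⟩, hj⟩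
    constructor
    · intro j a h
      exact hj j a (by unfold joinMaps; rw [h]; rfl)
    · intro j a h
      cases h1 : σ₁ j with
      | none => exact hj j a (by unfold joinMaps; rw [h1]; simpa using h)
      | some b =>
        have : b = a := hc1 j b a h1 h
        subst this
        exact hj j b (by unfold joinMaps; rw [h1]; rfl)

lemma extends_single_iff (π : Fin n → Fin n) (i i' : Fin n) :
    ExtendsMap π (singleMap i i') ↔ π i = i' := by
  constructor
  · intro h; exact h i i' (by simp [singleMap])
  · intro h j a hj
    unfold singleMap at hj
    by_cases hji : j = i
    · subst hji; simp at hj; subst hj; exact h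
    · simp [hji] at hj

/-- Given isomorphisms `π₁,…,π_k : G ≃ H` and a probability distribution `p`, the
vectors `v_σ ∈ ℝ^k` whose `i`-th coordinate is `√(p i)` if `π_i` extends `σ` and
`0` otherwise satisfy the level-`r` Lasserre constraints for graph isomorphism:
`‖v_∅‖ = 1`; `Σ_{i',j'} ⟨v_{i→i'}, v_{j→j'}⟩ B_{i'j'} = A_{ij}`;
`⟨v_{σ₁}, v_{σ₂}⟩` depends only on `σ₁ ∧ σ₂` (and vanishes on inconsistent pairs,
i.e. when `σ₁ ∧ σ₂ = ⊥`); and `v_σ = Σ_{i'} v_{σ ∧ (i→i')}`, `v_σ = Σ_i v_{σ ∧ (i→i')}`. -/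
theorem lasserre_feasible_of_isomorphisms (G H : SimpleGraph (Fin n))
    (π : Fin k → G ≃g H) (p : Fin k → ℝ)
    (hp : ∀ i, 0 ≤ p i) (hp1 : ∑ i, p i = 1) (r : ℕ)
    (A B : Fin n → Fin n → ℝ)
    (hA : ∀ i j, A i j = if G.Adj i j then 1 else 0)
    (hB : ∀ i j, B i j = if H.Adj i j then 1 else 0)
    (v : (Fin n → Option (Fin n)) → Fin k → ℝ)
    (hv : ∀ σ i, v σ i = if ExtendsMap (π i) σ then Real.sqrt (p i) else 0)
    (dot : (Fin n → Option (Fin n)) → (Fin n → Option (Fin n)) → ℝ)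
    (hdot : ∀ σ τ, dot σ τ = ∑ i, v σ i * v τ i) :
    -- (L1) ‖v_∅‖ = 1
    (Real.sqrt (dot (fun _ => none) (fun _ => none)) = 1) ∧
    -- (L2) ∀ i j, Σ_{i',j'} ⟨v_{i→i'}, v_{j→j'}⟩ B_{i'j'} = A_{ij}
    (∀ i j : Fin n,
      ∑ i' : Fin n, ∑ j' : Fin n, dot (singleMap i i') (singleMap j j') * B i' j' = A i j) ∧
    -- (L3) ⟨v_{σ₁}, v_{σ₂}⟩ = ⟨v_{σ₁'}, v_{σ₂'}⟩ whenever σ₁∧σ₂ = σ₁'∧σ₂'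
    (∀ σ₁ σ₂ σ₁' σ₂' : Fin n → Option (Fin n),
      domSize σ₁ ≤ r → domSize σ₂ ≤ r → domSize σ₁' ≤ r → domSize σ₂' ≤ r →
      ((ConsistentMaps σ₁ σ₂ → ConsistentMaps σ₁' σ₂' →
          joinMaps σ₁ σ₂ = joinMaps σ₁' σ₂' → dot σ₁ σ₂ = dot σ₁' σ₂') ∧
       (¬ ConsistentMaps σ₁ σ₂ → dot σ₁ σ₂ = 0))) ∧
    -- (L4) v_σ = Σ_{i'} v_{σ∧(i→i')}
    (∀ σ : Fin n → Option (Fin n), domSize σ ≤ r → ∀ i : Fin n, ∀ t : Fin k,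
      v σ t = ∑ i' : Fin n,
        if ConsistentMaps σ (singleMap i i') then v (joinMaps σ (singleMap i i')) t else 0) ∧
    -- (L5) v_σ = Σ_i v_{σ∧(i→i')}
    (∀ σ : Fin n → Option (Fin n), domSize σ ≤ r → ∀ i' : Fin n, ∀ t : Fin k,
      v σ t = ∑ i : Fin n,
        if ConsistentMaps σ (singleMap i i') then v (joinMaps σ (singleMap i i')) t else 0) := by
  have hinj : ∀ t, Function.Injective ((π t : Fin n → Fin n)) := fun t => (π t).injective
  have hdot' : ∀ σ τ, dot σ τ =
      ∑ t, if ExtendsMap (π t) σ ∧ ExtendsMap (π t) τ then p t else 0 := by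
    intro σ τ
    rw [hdot]
    apply Finset.sum_congr rfl
    intro t _
    rw [hv, hv]
    by_cases h1 : ExtendsMap (π t) σ <;> by_cases h2 : ExtendsMap (π t) τ <;>
      simp [h1, h2, Real.mul_self_sqrt (hp t)]
  have hext_none : ∀ t, ExtendsMap (π t) (fun _ => none) := by
    intro t j a h; simp at h
  have key : ∀ σ i i' t,
      (if ConsistentMaps σ (singleMap i i') then v (joinMaps σ (singleMap i i')) t else 0)
        = if ((π t) i = i' ∧ ExtendsMap (π t) σ) then Real.sqrt (p t) else 0 := by
    intro σ i i' t
    by_cases hcons : ConsistentMaps σ (singleMap i i')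
    · rw [if_pos hcons, hv]
      by_cases hj : ExtendsMap (π t) (joinMaps σ (singleMap i i'))
      · have h := (extends_join_iff (hinj t) _ _).mpr ⟨hcons, hj⟩
        rw [if_pos hj, if_pos ⟨(extends_single_iff _ i i').mp h.2, h.1⟩]
      · rw [if_neg hj, if_neg]
        rintro ⟨h1, h2⟩
        exact hj ((extends_join_iff (hinj t) _ _).mp
          ⟨h2, (extends_single_iff _ i i').mpr h1⟩).2
    · rw [if_neg hcons, if_neg]
      rintro ⟨h1, h2⟩
      exact hcons ((extends_join_iff (hinj t) _ _).mp
        ⟨h2, (extends_single_iff _ i i').mpr h1⟩).1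
  refine ⟨?_, ?_, ?_, ?_, ?_⟩
  · rw [hdot']
    have : ∀ t : Fin k,
        (if ExtendsMap (π t) (fun _ => none) ∧ ExtendsMap (π t) (fun _ => none)
          then p t else 0) = p t := by
      intro t; rw [if_pos ⟨hext_none t, hext_none t⟩]
    simp only [this]
    rw [hp1, Real.sqrt_one]
  · intro i j
    have step1 : ∀ i' j' : Fin n, dot (singleMap i i') (singleMap j j') * B i' j' =
        ∑ t, if ((π t) i = i' ∧ (π t) j = j') then p t * B i' j' else 0 := by
      intro i' j'
      rw [hdot', Finset.sum_mul]
      apply Finset.sum_congr rfl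
      intro t _
      simp [extends_single_iff, ite_mul]
    simp only [step1]
    have swap1 : ∀ i' : Fin n, (∑ j' : Fin n, ∑ t : Fin k,
        if ((π t) i = i' ∧ (π t) j = j') then p t * B i' j' else 0)
          = ∑ t : Fin k, ∑ j' : Fin n,
        if ((π t) i = i' ∧ (π t) j = j') then p t * B i' j' else 0 := by
      intro i'; rw [Finset.sum_comm]
    simp only [swap1]
    rw [Finset.sum_comm]
    have inner : ∀ t, (∑ i' : Fin n, ∑ j' : Fin n,
        if ((π t) i = i' ∧ (π t) j = j') then p t * B i' j' else 0)
          = p t * B ((π t) i) ((π t) j) := by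
      intro t
      rw [Finset.sum_eq_single ((π t) i)]
      · rw [Finset.sum_eq_single ((π t) j)]
        · simp
        · intro b _ hb; simp [Ne.symm hb]
        · simp
      · intro b _ hb
        apply Finset.sum_eq_zero
        intro j' _; simp [Ne.symm hb]
      · simp
    simp only [inner]
    have hBA : ∀ t : Fin k, B ((π t) i) ((π t) j) = A i j := by
      intro t; rw [hA, hB]
      simp [(π t).map_adj_iff]
    simp only [hBA]
    rw [← Finset.sum_mul, hp1, one_mul]
  · intro σ₁ σ₂ σ₁' σ₂' _ _ _ _
    constructor
    · intro hc hc' hjoin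
      rw [hdot', hdot']
      apply Finset.sum_congr rfl
      intro t _
      have e1 : (ExtendsMap (π t) σ₁ ∧ ExtendsMap (π t) σ₂) ↔
          ExtendsMap (π t) (joinMaps σ₁ σ₂) := by
        rw [extends_join_iff (hinj t)]; exact and_iff_right hc
      have e2 : (ExtendsMap (π t) σ₁' ∧ ExtendsMap (π t) σ₂') ↔
          ExtendsMap (π t) (joinMaps σ₁' σ₂') := by
        rw [extends_join_iff (hinj t)]; exact and_iff_right hc'
      simp only [e1, e2, hjoin]
    · intro hc
      rw [hdot']
      apply Finset.sum_eq_zero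
      intro t _
      rw [if_neg]
      intro h
      exact hc ((extends_join_iff (hinj t) σ₁ σ₂).mp h).1
  · intro σ _ i t
    simp only [key]
    rw [hv]
    by_cases h : ExtendsMap (π t) σ
    · simp [h, Finset.sum_ite_eq]
    · simp [h]
  · intro σ _ i' t
    simp only [key]
    rw [hv]
    by_cases h : ExtendsMap (π t) σ
    · rw [if_pos h, Finset.sum_eq_single (((π t).symm : Fin n → Fin n) i')]
      · simp [h]
      · intro b _ hb
        rw [if_neg]
        rintro ⟨h1, _⟩
        apply hb
        rw [← h1]; simp
      · simp
    · simp [h]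


end
end
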